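/- Let (U, S) be a set cover instance with universe U of size n ≥ 2 and collection S = {S_1,…,S_m} of m ≥ 1 nonempty subsets of U whose union is U, let S_sc be a minimum-size set cover, let q be a positive integer with q ≥ m·ln n, and let G_I be the associated bipartite graph with weights w_v = 1 and w_e = 1/q. Then the minimum weight of a mixed dominating set of G_I equals |S_sc| + (m − |S_sc|)/q. -/
import Mathlib


/-- Mixed dominating set, see paper. -/
def IsMixedDomSet {V : Type*} (G : SimpleGraph V) (VD : Finset V) (ED : Finset (Sym2 V)) :
    Prop :=
  (∀ e ∈ ED, e ∈ G.edgeSet) ∧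
  (∀ v : V, v ∉ VD → (∃ e ∈ ED, v ∈ e) ∨ ∃ u ∈ VD, G.Adj v u) ∧
  (∀ e ∈ G.edgeSet, e ∉ ED → ∃ v ∈ e, v ∈ VD ∨ ∃ f ∈ ED, v ∈ f)

/-- The bipartite graph associated to a set cover instance `S : Fin m → Finset (Fin n)` and a
positive integer `q`: one vertex `s_j` (left) per set, and `q² + 1` copies `u_{i,k}` (right)
of each element `i` of the universe; `s_j` is adjacent to `u_{i,k}` iff `i ∈ S j`. -/
def scGraph (n m q : ℕ) (S : Fin m → Finset (Fin n)) :
    SimpleGraph (Fin m ⊕ Fin n × Fin (q ^ 2 + 1)) :=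
  SimpleGraph.fromRel (fun a b =>
    match a, b with
    | Sum.inl j, Sum.inr (i, _) => i ∈ S j
    | _, _ => False)

section Helpers
variable {n m q : ℕ} {S : Fin m → Finset (Fin n)}
lemma adj_lr {j i k} : (scGraph n m q S).Adj (Sum.inl j) (Sum.inr (i,k)) ↔ i ∈ S j := by
  simp [scGraph]
lemma adj_rl {j i k} : (scGraph n m q S).Adj (Sum.inr (i,k)) (Sum.inl j) ↔ i ∈ S j := by
  simp [scGraph]
lemma not_adj_ll {j j'} : ¬ (scGraph n m q S).Adj (Sum.inl j) (Sum.inl j') := by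
  simp [scGraph]
lemma not_adj_rr {u u' : Fin n × Fin (q^2+1)} : ¬ (scGraph n m q S).Adj (Sum.inr u) (Sum.inr u') := by
  simp [scGraph]
lemma edge_shape {e : Sym2 (Fin m ⊕ Fin n × Fin (q^2+1))} (he : e ∈ (scGraph n m q S).edgeSet) :
    ∃ j i k, i ∈ S j ∧ e = s(Sum.inl j, Sum.inr (i,k)) := by
  induction e using Sym2.ind with
  | _ a b =>
    rw [SimpleGraph.mem_edgeSet] at he
    rcases a with j | ⟨i,k⟩ <;> rcases b with j' | ⟨i',k'⟩
    · exact absurd he not_adj_ll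
    · exact ⟨j, i', k', adj_lr.mp he, rfl⟩
    · exact ⟨j', i, k, adj_rl.mp he, Sym2.eq_swap⟩
    · exact absurd he not_adj_rr
lemma right_unique {e : Sym2 (Fin m ⊕ Fin n × Fin (q^2+1))} (he : e ∈ (scGraph n m q S).edgeSet)
    {u u' : Fin n × Fin (q^2+1)} (hu : Sum.inr u ∈ e) (hu' : Sum.inr u' ∈ e) : u = u' := by
  obtain ⟨j, i, k, -, rfl⟩ := edge_shape he
  rw [Sym2.mem_iff] at hu hu'
  rcases hu with h | h <;> rcases hu' with h' | h' <;> simp_all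
lemma left_unique {e : Sym2 (Fin m ⊕ Fin n × Fin (q^2+1))} (he : e ∈ (scGraph n m q S).edgeSet)
    {j j' : Fin m} (hu : Sum.inl j ∈ e) (hu' : Sum.inl j' ∈ e) : j = j' := by
  obtain ⟨j₀, i, k, -, rfl⟩ := edge_shape he
  rw [Sym2.mem_iff] at hu hu'
  rcases hu with h | h <;> rcases hu' with h' | h' <;> simp_all
lemma count_right (VD : Finset (Fin m ⊕ Fin n × Fin (q^2+1)))
    (ED : Finset (Sym2 (Fin m ⊕ Fin n × Fin (q^2+1))))
    (hED : ∀ e ∈ ED, e ∈ (scGraph n m q S).edgeSet)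
    (W : Finset (Fin n × Fin (q^2+1)))
    (hW : ∀ u ∈ W, Sum.inr u ∈ VD ∨ ∃ e ∈ ED, Sum.inr u ∈ e) :
    W.card ≤ (Finset.univ.filter (fun u : Fin n × Fin (q^2+1) => Sum.inr u ∈ VD)).card
      + ED.card := by
  classical
  set B := Finset.univ.filter (fun u : Fin n × Fin (q^2+1) => Sum.inr u ∈ VD) with hB
  have h := Finset.card_le_card_of_injOn
    (f := fun u : Fin n × Fin (q^2+1) =>
      if Sum.inr u ∈ VD then Sum.inl u
      else if h : ∃ e ∈ ED, Sum.inr u ∈ e then Sum.inr h.choose else Sum.inl u)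
    (s := W) (t := B.image Sum.inl ∪ ED.image Sum.inr) ?_ ?_
  · refine h.trans ?_
    refine (Finset.card_union_le _ _).trans ?_
    gcongr <;> exact Finset.card_image_le
  · intro u hu
    by_cases h1 : Sum.inr u ∈ VD
    · simp only [h1, if_true]
      exact Finset.mem_union_left _ (Finset.mem_image_of_mem _ (by simp [hB, h1]))
    · have hex : ∃ e ∈ ED, Sum.inr u ∈ e := (hW u hu).resolve_left h1
      simp only [h1, if_false, dif_pos hex]
      exact Finset.mem_union_right _ (Finset.mem_image_of_mem _ hex.choose_spec.1)
  · intro u hu u' hu' heq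
    by_cases h1 : Sum.inr u ∈ VD <;> by_cases h1' : Sum.inr u' ∈ VD
    · simpa [h1, h1'] using heq
    · have hex' : ∃ e ∈ ED, Sum.inr u' ∈ e := (hW u' hu').resolve_left h1'
      simp [h1, h1', dif_pos hex'] at heq
    · have hex : ∃ e ∈ ED, Sum.inr u ∈ e := (hW u hu).resolve_left h1
      simp [h1, h1', dif_pos hex] at heq
    · have hex : ∃ e ∈ ED, Sum.inr u ∈ e := (hW u hu).resolve_left h1
      have hex' : ∃ e ∈ ED, Sum.inr u' ∈ e := (hW u' hu').resolve_left h1'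
      simp only [h1, h1', if_false, dif_pos hex, dif_pos hex', Sum.inr.injEq] at heq
      have s1 := hex.choose_spec
      have s2 := hex'.choose_spec
      rw [heq] at s1
      exact right_unique (hED _ s2.1) s1.2 s2.2
lemma count_left (ED : Finset (Sym2 (Fin m ⊕ Fin n × Fin (q^2+1))))
    (hED : ∀ e ∈ ED, e ∈ (scGraph n m q S).edgeSet)
    (J : Finset (Fin m)) (hJ : ∀ j ∈ J, ∃ e ∈ ED, Sum.inl j ∈ e) :
    J.card ≤ ED.card := by
  classical
  refine Finset.card_le_card_of_injOn
    (fun j => if h : ∃ e ∈ ED, Sum.inl j ∈ e then h.choose else s(Sum.inl j, Sum.inl j)) ?_ ?_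
  · intro j hj
    dsimp only
    rw [dif_pos (hJ j hj)]
    exact (hJ j hj).choose_spec.1
  · intro j hj j' hj' heq
    dsimp only at heq
    rw [dif_pos (hJ j hj), dif_pos (hJ j' hj')] at heq
    have s1 := (hJ j hj).choose_spec
    have s2 := (hJ j' hj').choose_spec
    rw [heq] at s1
    exact left_unique (hED _ s2.1) s1.2 s2.2

lemma arith2 {t mr qr : ℝ} (hq1 : 1 ≤ qr) (ht0 : 0 ≤ t) (ht2 : t ≤ 2)
    (hm : mr * 0.6931471803 ≤ qr) : t * qr + (mr - t) ≤ qr ^ 2 + 1 := by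
  nlinarith [sq_nonneg (qr - 7/4), sq_nonneg (qr - 1),
    mul_nonneg (sub_nonneg.2 ht2) (sub_nonneg.2 hq1)]

lemma div_aux {x y u v qr : ℝ} (hq : 0 < qr) (h : x * qr + y ≤ u * qr + v) :
    x + y / qr ≤ u + v / qr := by
  rw [show x + y / qr = (x * qr + y) / qr by field_simp,
      show u + v / qr = (u * qr + v) / qr by field_simp]
  exact div_le_div_of_nonneg_right h hq.le

end Helpers

/-- For a set cover instance with universe of size `n ≥ 2`, `m ≥ 1` nonempty sets covering
the universe, minimum set cover `T`, and a positive integer `q ≥ m · ln n`, the minimum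
weight of a mixed dominating set of the associated bipartite graph with weights `w_v = 1`,
`w_e = 1/q` equals `|T| + (m − |T|)/q`. -/
theorem minWeight_scGraph (n m q : ℕ) (hn : 2 ≤ n) (hm : 1 ≤ m) (hq : 0 < q)
    (S : Fin m → Finset (Fin n)) (hSne : ∀ j : Fin m, (S j).Nonempty)
    (hScov : ∀ i : Fin n, ∃ j : Fin m, i ∈ S j)
    (hqlog : (m : ℝ) * Real.log n ≤ (q : ℝ))
    (T : Finset (Fin m)) (hT : ∀ i : Fin n, ∃ j ∈ T, i ∈ S j)
    (hTmin : ∀ T' : Finset (Fin m), (∀ i : Fin n, ∃ j ∈ T', i ∈ S j) → T.card ≤ T'.card) :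
    (∃ (VD : Finset (Fin m ⊕ Fin n × Fin (q ^ 2 + 1)))
        (ED : Finset (Sym2 (Fin m ⊕ Fin n × Fin (q ^ 2 + 1)))),
      IsMixedDomSet (scGraph n m q S) VD ED ∧
        1 * (VD.card : ℝ) + 1 / q * (ED.card : ℝ) = T.card + ((m : ℝ) - T.card) / q) ∧
    (∀ (VD : Finset (Fin m ⊕ Fin n × Fin (q ^ 2 + 1)))
        (ED : Finset (Sym2 (Fin m ⊕ Fin n × Fin (q ^ 2 + 1)))),
      IsMixedDomSet (scGraph n m q S) VD ED →
        (T.card : ℝ) + ((m : ℝ) - T.card) / q ≤ 1 * (VD.card : ℝ) + 1 / q * (ED.card : ℝ)) := by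
  classical
  constructor
  · -- upper bound
    classical
    set c : Fin m → Fin n := fun j => (hSne j).choose with hc
    have hcS : ∀ j, c j ∈ S j := fun j => (hSne j).choose_spec
    refine ⟨T.image Sum.inl,
      Tᶜ.image (fun j => s(Sum.inl j, Sum.inr (c j, (0 : Fin (q^2+1))))), ⟨?_, ?_, ?_⟩, ?_⟩
    · intro e he
      simp only [Finset.mem_image] at he
      obtain ⟨j, -, rfl⟩ := he
      rw [SimpleGraph.mem_edgeSet, adj_lr]
      exact hcS j
    · intro v hv
      rcases v with j | ⟨i, k⟩
      · left
        have hjT : j ∉ T := fun h => hv (Finset.mem_image_of_mem _ h)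
        exact ⟨s(Sum.inl j, Sum.inr (c j, 0)),
          Finset.mem_image_of_mem _ (Finset.mem_compl.mpr hjT), by simp⟩
      · right
        obtain ⟨j, hjT, hij⟩ := hT i
        exact ⟨Sum.inl j, Finset.mem_image_of_mem _ hjT, adj_rl.mpr hij⟩
    · intro e he hne
      obtain ⟨j, i, k, hij, rfl⟩ := edge_shape he
      by_cases hjT : j ∈ T
      · exact ⟨Sum.inl j, by simp, Or.inl (Finset.mem_image_of_mem _ hjT)⟩
      · refine ⟨Sum.inl j, by simp, Or.inr ⟨s(Sum.inl j, Sum.inr (c j, 0)),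
          Finset.mem_image_of_mem _ (Finset.mem_compl.mpr hjT), by simp⟩⟩
    · have hinj1 : (T.image Sum.inl).card = T.card :=
        Finset.card_image_of_injective _ (Sum.inl_injective (α := Fin m) (β := Fin n × Fin (q^2+1)))
      have hinj2 : (Tᶜ.image (fun j => (s(Sum.inl j, Sum.inr (c j, (0:Fin (q^2+1)))) : Sym2 (Fin m ⊕ Fin n × Fin (q^2+1))))).card
          = Tᶜ.card := by
        apply Finset.card_image_of_injOn
        intro a _ b _ hab
        simp only [Sym2.eq, Sym2.rel_iff', Prod.mk.injEq, Sum.inl.injEq, Sum.inr.injEq] at hab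
        rcases hab with ⟨h, -⟩ | ⟨h, -⟩ <;> simp_all
      have hTle : T.card ≤ m := by
        simpa using Finset.card_le_card (Finset.subset_univ T)
      rw [hinj1, hinj2, Finset.card_compl, Fintype.card_fin]
      have hq' : (0:ℝ) < q := by positivity
      rw [Nat.cast_sub hTle]
      field_simp
  · -- lower bound
    classical
    rintro VD ED ⟨h1, h2, h3⟩
    set A : Finset (Fin m) := Finset.univ.filter (fun j => Sum.inl j ∈ VD) with hA
    set B : Finset (Fin n × Fin (q^2+1)) :=
      Finset.univ.filter (fun u => Sum.inr u ∈ VD) with hB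
    -- |A| + |B| ≤ |VD|
    have hABVD : A.card + B.card ≤ VD.card := by
      have hsub : A.image Sum.inl ∪ B.image Sum.inr ⊆ VD := by
        intro v hv
        rcases Finset.mem_union.mp hv with h | h <;>
          · obtain ⟨a, ha, rfl⟩ := Finset.mem_image.mp h
            simp only [hA, hB, Finset.mem_filter] at ha
            exact ha.2
      have hdisj : Disjoint (A.image Sum.inl) (B.image (Sum.inr : _ → Fin m ⊕ Fin n × Fin (q^2+1))) := by
        rw [Finset.disjoint_left]
        rintro v hv hv'
        obtain ⟨a, -, rfl⟩ := Finset.mem_image.mp hv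
        obtain ⟨b, -, hb⟩ := Finset.mem_image.mp hv'
        exact absurd hb (by simp)
      calc A.card + B.card
          = (A.image Sum.inl ∪ B.image Sum.inr).card := by
            rw [Finset.card_union_of_disjoint hdisj,
              Finset.card_image_of_injective _ Sum.inl_injective,
              Finset.card_image_of_injective _ Sum.inr_injective]
        _ ≤ VD.card := Finset.card_le_card hsub
    have hq1 : (1:ℝ) ≤ q := by exact_mod_cast hq
    have hq0 : (0:ℝ) < q := by positivity
    have hTm : T.card ≤ m := by simpa using Finset.card_le_card (Finset.subset_univ T)
    rw [one_mul, one_div, inv_mul_eq_div]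
    apply div_aux hq0
    by_cases hcase : B.card + ED.card ≤ q^2
    · -- small case: A is a cover and every j ∉ A meets an edge of ED
      have hcover : ∀ i : Fin n, ∃ j ∈ A, i ∈ S j := by
        intro i
        by_contra hno
        push_neg at hno
        have hW : ∀ u ∈ (Finset.univ.image (fun k : Fin (q^2+1) => ((i,k) : Fin n × Fin (q^2+1)))),
            Sum.inr u ∈ VD ∨ ∃ e ∈ ED, Sum.inr u ∈ e := by
          intro u hu
          obtain ⟨k, -, rfl⟩ := Finset.mem_image.mp hu
          by_cases hv : Sum.inr ((i,k) : Fin n × Fin (q^2+1)) ∈ VD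
          · exact Or.inl hv
          rcases h2 _ hv with h | ⟨w, hw, hadj⟩
          · exact Or.inr h
          · rcases w with j | u'
            · exact absurd (adj_rl.mp hadj) (hno j (Finset.mem_filter.mpr ⟨Finset.mem_univ _, hw⟩))
            · exact absurd hadj not_adj_rr
        have hcard := count_right VD ED h1 _ hW
        rw [Finset.card_image_of_injective _ (fun a b h => by simpa using h)] at hcard
        simp only [Finset.card_univ, Fintype.card_fin, ← hB] at hcard
        omega
      have hTA : T.card ≤ A.card := hTmin A hcover
      have hleft : ∀ j ∈ Finset.univ \ A, ∃ e ∈ ED, Sum.inl j ∈ e := by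
        intro j hj
        have hjA : j ∉ A := (Finset.mem_sdiff.mp hj).2
        have hjv : Sum.inl j ∉ VD := fun h => hjA (Finset.mem_filter.mpr ⟨Finset.mem_univ _, h⟩)
        by_contra hno
        push_neg at hno
        obtain ⟨i, hi⟩ := hSne j
        have hW : ∀ u ∈ (Finset.univ.image (fun k : Fin (q^2+1) => ((i,k) : Fin n × Fin (q^2+1)))),
            Sum.inr u ∈ VD ∨ ∃ e ∈ ED, Sum.inr u ∈ e := by
          intro u hu
          obtain ⟨k, -, rfl⟩ := Finset.mem_image.mp hu
          have hedge : s(Sum.inl j, Sum.inr ((i,k) : Fin n × Fin (q^2+1))) ∈ (scGraph n m q S).edgeSet := by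
            rw [SimpleGraph.mem_edgeSet]; exact adj_lr.mpr hi
          have hnotED : s(Sum.inl j, Sum.inr ((i,k) : Fin n × Fin (q^2+1))) ∉ ED := by
            intro h
            exact hno _ h (by simp)
          obtain ⟨v, hv, hvc⟩ := h3 _ hedge hnotED
          rw [Sym2.mem_iff] at hv
          rcases hv with rfl | rfl
          · rcases hvc with h | ⟨f, hf, hjf⟩
            · exact absurd h hjv
            · exact absurd hjf (hno f hf)
          · exact hvc
        have hcard := count_right VD ED h1 _ hW
        rw [Finset.card_image_of_injective _ (fun a b h => by simpa using h)] at hcard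
        simp only [Finset.card_univ, Fintype.card_fin, ← hB] at hcard
        omega
      have hE : m - A.card ≤ ED.card := by
        have := count_left ED h1 _ hleft
        rwa [Finset.card_sdiff_of_subset (Finset.subset_univ A), Finset.card_univ, Fintype.card_fin] at this
      have hAm : A.card ≤ m := by simpa using Finset.card_le_card (Finset.subset_univ A)
      have hE' : (m:ℝ) - A.card ≤ ED.card := by
        have : ((m - A.card : ℕ) : ℝ) ≤ ED.card := by exact_mod_cast hE
        rwa [Nat.cast_sub hAm] at this
      have hTA' : (T.card:ℝ) ≤ A.card := by exact_mod_cast hTA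
      have hABVD' : (A.card:ℝ) + B.card ≤ VD.card := by exact_mod_cast hABVD
      have hBpos : (0:ℝ) ≤ B.card := Nat.cast_nonneg _
      have p1 : (0:ℝ) ≤ ((A.card:ℝ) - T.card) * ((q:ℝ) - 1) :=
        mul_nonneg (by linarith) (by linarith)
      have p2 : ((A.card:ℝ) + B.card) * q ≤ (VD.card:ℝ) * q :=
        mul_le_mul_of_nonneg_right hABVD' hq0.le
      have p3 : (0:ℝ) ≤ (B.card:ℝ) * q := mul_nonneg hBpos hq0.le
      linarith [p1, p2, p3]
    · -- big case
      push_neg at hcase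
      have hBE : (q:ℝ)^2 + 1 ≤ B.card + ED.card := by
        have : q^2 + 1 ≤ B.card + ED.card := hcase
        exact_mod_cast this
      have hBVD : (B.card : ℝ) ≤ VD.card := by
        have : B.card ≤ VD.card := le_trans (Nat.le_add_left _ _) hABVD
        exact_mod_cast this
      have hkey : (T.card:ℝ) * q + ((m:ℝ) - T.card) ≤ (q:ℝ)^2 + 1 := by
        by_cases hn3 : 3 ≤ n
        · have hlog3 : (1:ℝ) ≤ Real.log n := by
            rw [Real.le_log_iff_exp_le (by positivity)]
            calc Real.exp 1 ≤ 2.7182818286 := le_of_lt Real.exp_one_lt_d9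
              _ ≤ 3 := by norm_num
              _ ≤ n := by exact_mod_cast hn3
          have hmq : (m:ℝ) ≤ q := by
            calc (m:ℝ) = m * 1 := (mul_one _).symm
              _ ≤ m * Real.log n := by
                  exact mul_le_mul_of_nonneg_left hlog3 (Nat.cast_nonneg m)
              _ ≤ q := hqlog
          have hTm' : (T.card:ℝ) ≤ m := by exact_mod_cast hTm
          have p1 : (0:ℝ) ≤ ((m:ℝ) - T.card) * ((q:ℝ) - 1) :=
            mul_nonneg (by linarith) (by linarith)
          have p2 : (m:ℝ) * q ≤ (q:ℝ) * q := mul_le_mul_of_nonneg_right hmq hq0.le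
          linarith [p1, p2]
        · have hn2 : n = 2 := by omega
          subst hn2
          -- T.card ≤ 2
          obtain ⟨j0, hj0⟩ := hScov 0
          obtain ⟨j1, hj1⟩ := hScov 1
          have hT2 : T.card ≤ 2 := by
            have hco : ∀ i : Fin 2, ∃ j ∈ ({j0, j1} : Finset (Fin m)), i ∈ S j := by
              intro i
              fin_cases i
              · exact ⟨j0, by simp, hj0⟩
              · exact ⟨j1, by simp, hj1⟩
            calc T.card ≤ ({j0, j1} : Finset (Fin m)).card := hTmin _ hco
              _ ≤ 2 := (Finset.card_insert_le _ _).trans (by simp)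
          have hT2' : (T.card:ℝ) ≤ 2 := by exact_mod_cast hT2
          have hlog2 : (0.6931471803:ℝ) < Real.log 2 := Real.log_two_gt_d9
          have hm2 : (m:ℝ) * 0.6931471803 ≤ q := by
            have : (m:ℝ) * Real.log 2 ≤ q := by
              have : ((2:ℕ):ℝ) = 2 := by norm_num
              rwa [this] at hqlog
            nlinarith [Nat.cast_nonneg (α := ℝ) m, this]
          exact arith2 hq1 (Nat.cast_nonneg _) hT2' hm2
      have p1 : (B.card:ℝ) * q ≤ (VD.card:ℝ) * q := mul_le_mul_of_nonneg_right hBVD hq0.le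
      have p2 : (0:ℝ) ≤ (B.card:ℝ) * ((q:ℝ) - 1) :=
        mul_nonneg (Nat.cast_nonneg _) (by linarith)
      linarith [p1, p2]
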